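/- arXiv:2007.09125 — 7 statements merged into one kernel-verified Lean document; each statement's English description precedes it below -/
import Mathlib

section
/- Every oriented hypergraph has an algebraic spanning tree over the reals: there exists T ⊆ E such that ℬ := γ^{-1}(Im δ^0) has a basis (x_t : t∈T) with ⟨x_t, t'⟩ = δ_{tt'} for all t'∈T, and 𝒞 := Ker ∂_1 has a basis (x_e : e∈E∖T) with ⟨x_e, e'⟩ = δ_{ee'} for all e'∈E∖T. -/
open Finset

/-- Incidence sign of vertex `v` in edge `e = (A e, B e)`. -/
def hsgnR {V E : Type*} [DecidableEq V] (A B : E → Finset V) (e : E) (v : V) : ℝ :=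
  (if v ∈ B e then 1 else 0) - (if v ∈ A e then 1 else 0)

/-- The boundary homomorphism `∂₁ : C₁ → C₀` of an oriented hypergraph over `ℝ`. -/
noncomputable def bdryR {V E : Type*} [DecidableEq V] [Fintype E] (A B : E → Finset V) :
    (E → ℝ) →ₗ[ℝ] (V → ℝ) :=
  LinearMap.pi fun v => ∑ e : E, hsgnR A B e v • (LinearMap.proj e : (E → ℝ) →ₗ[ℝ] ℝ)

/-- The coboundary homomorphism `δ⁰ : C⁰ → C¹`, the dual of `∂₁`. -/
noncomputable def cobdryR {V E : Type*} [DecidableEq V] [Fintype E] (A B : E → Finset V) :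
    Module.Dual ℝ (V → ℝ) →ₗ[ℝ] Module.Dual ℝ (E → ℝ) :=
  (bdryR A B).dualMap

/-- The canonical map `γ` from chains to cochains (dual-basis map). -/
noncomputable def gamR (ι : Type*) [Fintype ι] [DecidableEq ι] :
    (ι → ℝ) →ₗ[ℝ] Module.Dual ℝ (ι → ℝ) :=
  (Pi.basisFun ℝ ι).toDual

/-
The cycle space `𝒞 = ker ∂₁` and the cut space `ℬ = γ⁻¹(Im δ⁰) = γ⁻¹(Ann 𝒞)` are orthogonal
complements in `ℝ^E` for the dot product. Pick `T ⊆ E` such that the coordinate functionals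
`x ↦ x t`, `t ∈ T`, form a basis of the dual of `ℬ` (a maximal independent set of them); then
restriction to the coordinates in `T` is an isomorphism `ℬ ≃ ℝ^T`. A cycle vanishing on `E ∖ T`
is orthogonal to every cut, in particular to the cut whose restriction to `T` is the indicator
of `t`, so it also vanishes at `t`. Hence restriction `𝒞 → ℝ^(E∖T)` is injective, and an
isomorphism by counting dimensions. The required bases are the preimages of the standard bases.
Nothing here is specific to `ℝ` or to hypergraphs.
-/

open Module Submodule

namespace Submodule

variable {K ι : Type*} [Field K]

def coordRestrict (W : Submodule K (ι → K)) (P : ι → Prop) : W →ₗ[K] ({i // P i} → K) :=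
  (LinearMap.funLeft K K Subtype.val).comp W.subtype

@[simp]
lemma coordRestrict_apply (W : Submodule K (ι → K)) (P : ι → Prop) (w : W) (i : {i // P i}) :
    coordRestrict W P w i = (w : ι → K) i :=
  rfl

lemma exists_basis_eq_single_of_bijective_coordRestrict [Fintype ι] [DecidableEq ι]
    {W : Submodule K (ι → K)} {P : ι → Prop} (h : Function.Bijective (coordRestrict W P)) :
    ∃ b : Basis {i // P i} K W, ∀ i j : {i // P i}, (b i : ι → K) j = if i = j then 1 else 0 := by
  let e := LinearEquiv.ofBijective _ h
  refine ⟨(Pi.basisFun K _).map e.symm, fun i j => ?_⟩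
  change e (e.symm (Pi.basisFun K _ i)) j = _
  rw [e.apply_symm_apply, Pi.basisFun_apply, Pi.single_apply]
  exact if_congr eq_comm rfl rfl

lemma exists_finset_bijective_coordRestrict [Fintype ι] (W : Submodule K (ι → K)) :
    ∃ T : Finset ι, Function.Bijective (coordRestrict W (· ∈ T)) := by
  let φ : ι → Dual K W := fun i => (LinearMap.proj i).comp W.subtype
  obtain ⟨s, -, -, hspan, hli⟩ :=
    exists_linearIndepOn_extension (linearIndepOn_empty K φ) (Set.empty_subset Set.univ)
  obtain ⟨T, rfl⟩ := s.toFinite.exists_finset_coe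
  have hker : (span K (φ '' T)).dualCoannihilator = LinearMap.ker (coordRestrict W (· ∈ T)) := by
    refine SetLike.coe_injective ?_
    rw [coe_dualCoannihilator_span]
    ext w
    simp [φ, funext_iff]
  have hbot : (span K (φ '' T)).dualCoannihilator = ⊥ := by
    refine eq_bot_iff.2 fun w hw => ?_
    have hcoord : ∀ i, (w : ι → K) i = 0 := fun i =>
      (mem_dualCoannihilator w).1 hw (φ i) (hspan ⟨i, trivial, rfl⟩)
    exact (mem_bot K).2 (Subtype.ext (funext hcoord))
  have hinj : Function.Injective (coordRestrict W (· ∈ T)) := by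
    rw [← LinearMap.ker_eq_bot, ← hker, hbot]
  have hdim : finrank K W = finrank K ({i // i ∈ T} → K) := by
    have := Subspace.finrank_add_finrank_dualCoannihilator_eq (span K (φ '' T))
    rw [hbot, finrank_bot, add_zero, Set.image_eq_range, finrank_span_eq_card hli] at this
    simp [← this]
  exact ⟨T, hinj, (LinearMap.injective_iff_surjective_of_finrank_eq_finrank hdim).1 hinj⟩

lemma injective_coordRestrict_compl_of_surjective [Fintype ι] {W U : Submodule K (ι → K)}
    (horth : ∀ w ∈ W, ∀ u ∈ U, w ⬝ᵥ u = 0) {P : ι → Prop}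
    (h : Function.Surjective (coordRestrict W P)) :
    Function.Injective (coordRestrict U (¬ P ·)) := by
  classical
  refine (injective_iff_map_eq_zero _).2 fun u hu => Subtype.ext (funext fun i => ?_)
  have hcompl : ∀ j, ¬ P j → (u : ι → K) j = 0 := fun j hj => congrFun hu ⟨j, hj⟩
  by_cases hi : P i
  · obtain ⟨w, hw⟩ := h (Pi.single ⟨i, hi⟩ 1)
    have hwP : ∀ j (hj : P j), (w : ι → K) j = if j = i then 1 else 0 := fun j hj => by
      simpa [Pi.single_apply, Subtype.ext_iff] using congrFun hw ⟨j, hj⟩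
    have : (w : ι → K) ⬝ᵥ u = (u : ι → K) i := by
      rw [dotProduct, Finset.sum_eq_single i]
      · simp [hwP i hi]
      · intro j _ hji
        by_cases hj : P j
        · simp [hwP j hj, hji]
        · simp [hcompl j hj]
      · simp
    rw [← this, horth w w.2 u u.2]
    rfl
  · exact hcompl i hi

lemma exists_finset_bijective_coordRestrict_of_orthogonal [Fintype ι]
    {W U : Submodule K (ι → K)} (horth : ∀ w ∈ W, ∀ u ∈ U, w ⬝ᵥ u = 0)
    (hdim : finrank K W + finrank K U = Fintype.card ι) :
    ∃ T : Finset ι, Function.Bijective (coordRestrict W (· ∈ T)) ∧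
      Function.Bijective (coordRestrict U (· ∉ T)) := by
  classical
  obtain ⟨T, hW⟩ := exists_finset_bijective_coordRestrict W
  have hU := injective_coordRestrict_compl_of_surjective horth hW.2
  have hcardT : finrank K W = T.card := by simpa using (LinearEquiv.ofBijective _ hW).finrank_eq
  have hdimU : finrank K U = finrank K ({i // i ∉ T} → K) := by
    rw [finrank_fintype_fun_eq_card, Fintype.card_subtype_compl, Fintype.card_coe]
    omega
  exact ⟨T, hW, hU, (LinearMap.injective_iff_surjective_of_finrank_eq_finrank hdimU).1 hU⟩

end Submodule

section

variable {K ι : Type*} [Field K] [Fintype ι] [DecidableEq ι]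

lemma Pi.basisFun_toDual_apply (x y : ι → K) : (Pi.basisFun K ι).toDual x y = x ⬝ᵥ y := by
  simp [Basis.toDual, dotProduct]

lemma dotProduct_eq_zero_of_mem_comap_toDual_dualAnnihilator {C : Submodule K (ι → K)}
    {x y : ι → K} (hx : x ∈ C.dualAnnihilator.comap (Pi.basisFun K ι).toDual) (hy : y ∈ C) :
    x ⬝ᵥ y = 0 := by
  rw [← Pi.basisFun_toDual_apply]
  exact (mem_dualAnnihilator _).1 hx y hy

lemma finrank_comap_toDual_dualAnnihilator_add_finrank (C : Submodule K (ι → K)) :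
    finrank K (C.dualAnnihilator.comap (Pi.basisFun K ι).toDual) + finrank K C
      = Fintype.card ι := by
  change finrank K (C.dualAnnihilator.comap
    ((Pi.basisFun K ι).toDualEquiv : (ι → K) →ₗ[K] _)) + _ = _
  rw [comap_equiv_eq_map_symm, LinearEquiv.finrank_map_eq, add_comm,
    Subspace.finrank_add_finrank_dualAnnihilator_eq, finrank_fintype_fun_eq_card]

end

theorem stmt4_general {V E : Type*} [Fintype E] [DecidableEq V] [DecidableEq E]
    (A B : E → Finset V) :
    ∃ T : Finset E,
      (∃ bB : Module.Basis {t : E // t ∈ T} ℝ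
          ↥(Submodule.comap (gamR E) (LinearMap.range (cobdryR A B))),
        ∀ t t' : {t : E // t ∈ T},
          (bB t : E → ℝ) t'.1 = (if t = t' then 1 else 0)) ∧
      (∃ bC : Module.Basis {e : E // e ∉ T} ℝ ↥(LinearMap.ker (bdryR A B)),
        ∀ e e' : {e : E // e ∉ T},
          (bC e : E → ℝ) e'.1 = (if e = e' then 1 else 0)) := by
  have hcuts : comap (gamR E) (LinearMap.range (cobdryR A B))
      = (LinearMap.ker (bdryR A B)).dualAnnihilator.comap (Pi.basisFun ℝ E).toDual := by
    rw [cobdryR, LinearMap.range_dualMap_eq_dualAnnihilator_ker]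
    rfl
  rw [hcuts]
  obtain ⟨T, hcut, hcycle⟩ := exists_finset_bijective_coordRestrict_of_orthogonal
    (fun _ hx _ hy => dotProduct_eq_zero_of_mem_comap_toDual_dualAnnihilator hx hy)
    (finrank_comap_toDual_dualAnnihilator_add_finrank (LinearMap.ker (bdryR A B)))
  exact ⟨T, exists_basis_eq_single_of_bijective_coordRestrict hcut,
    exists_basis_eq_single_of_bijective_coordRestrict hcycle⟩

/-- every hypergraph has an algebraic spanning tree over the reals:
a set `T ⊆ E` with a basis `(x_t : t ∈ T)` of `ℬ = γ⁻¹(Im δ⁰)` satisfying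
`⟨x_t, t'⟩ = δ_{tt'}` and a basis `(x_e : e ∈ E∖T)` of `𝒞 = Ker ∂₁` satisfying
`⟨x_e, e'⟩ = δ_{ee'}`. -/
theorem stmt4 {V E : Type*} [Fintype V] [Fintype E] [DecidableEq V] [DecidableEq E]
    (A B : E → Finset V) (hdisj : ∀ e, Disjoint (A e) (B e)) :
    ∃ T : Finset E,
      (∃ bB : Module.Basis {t : E // t ∈ T} ℝ
          ↥(Submodule.comap (gamR E) (LinearMap.range (cobdryR A B))),
        ∀ t t' : {t : E // t ∈ T},
          (bB t : E → ℝ) t'.1 = (if t = t' then 1 else 0)) ∧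
      (∃ bC : Module.Basis {e : E // e ∉ T} ℝ ↥(LinearMap.ker (bdryR A B)),
        ∀ e e' : {e : E // e ∉ T},
          (bC e : E → ℝ) e'.1 = (if e = e' then 1 else 0)) :=
  stmt4_general A B
end

section
/- Let V be a finite-dimensional real vector space with basis S and inner product making S orthonormal, and let U ⊆ V be any subspace. Then there exists T ⊆ S such that U^⊥ has a basis (x_t : t∈T) with ⟨x_t,t'⟩ = δ_{tt'} for all t'∈T, and U has a basis (x_s : s∈S∖T) with ⟨x_s,s'⟩ = δ_{ss'} for all s'∈S∖T. -/
/-!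
The projections of the orthonormal basis onto `Uᗮ` span `Uᗮ`; extract a basis of `Uᗮ` from them,
indexed by `T`. Then `x ↦ (⟪x, t⟫)_{t ∈ T}` is an isomorphism `Uᗮ ≃ ℝ^T`, and the fundamental cuts
are the preimages of the standard basis vectors. On `U`, the map `x ↦ (⟪x, s⟫)_{s ∉ T}` is
injective: if `x ∈ U` has no coordinates off `T`, pick `w ∈ Uᗮ` with the same `T`-coordinates as
`x`; Parseval gives `‖x‖² = ⟪w, x⟫ = 0`. Counting dimensions, it is an isomorphism too, and the
fundamental cycles are again the preimages of the standard basis vectors.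
-/

open scoped RealInnerProductSpace

open Module

section

variable {V : Type*} [NormedAddCommGroup V] [InnerProductSpace ℝ V] {κ ι : Type*}

noncomputable def innerCoords (W : Submodule ℝ V) (f : κ → V) : W →ₗ[ℝ] κ → ℝ :=
  LinearMap.pi fun k => innerₗ V (f k) ∘ₗ W.subtype

@[simp]
theorem innerCoords_apply (W : Submodule ℝ V) (f : κ → V) (x : W) (k : κ) :
    innerCoords W f x k = ⟪(x : V), f k⟫ :=
  real_inner_comm _ _

theorem exists_basis_inner_eq_ite [Fintype κ] [DecidableEq κ] {W : Submodule ℝ V}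
    {f : κ → V} (hf : Function.Bijective (innerCoords W f)) :
    ∃ e : Basis κ ℝ W, ∀ k k', ⟪(e k : V), f k'⟫ = if k = k' then 1 else 0 := by
  let eW := LinearEquiv.ofBijective (innerCoords W f) hf
  refine ⟨Basis.ofEquivFun eW, fun k k' => ?_⟩
  rw [← innerCoords_apply]
  change eW _ k' = _
  rw [Basis.coe_ofEquivFun, eW.apply_symm_apply, Pi.single_comm, Pi.single_apply]

theorem exists_finset_bijective_innerCoords [FiniteDimensional ℝ V] [Fintype ι]
    (b : Basis ι ℝ V) (W : Submodule ℝ V) :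
    ∃ T : Finset ι, Function.Bijective (innerCoords W fun t : {i // i ∈ T} => b t) := by
  let P : V →ₗ[ℝ] W := W.orthogonalProjectionOnto.toLinearMap
  have hP : Function.Surjective P := fun w =>
    ⟨w, W.orthogonalProjectionOnto_mem_subspace_eq_self w⟩
  have hspan : Submodule.span ℝ (Set.range (P ∘ b)) = ⊤ := by
    rw [Set.range_comp, Submodule.span_image, b.span_eq, Submodule.map_top,
      LinearMap.range_eq_top.mpr hP]
  obtain ⟨r, -, -, hr_span, hr_indep⟩ :=
    exists_linearIndepOn_extension (linearIndepOn_empty ℝ (P ∘ b)) (Set.empty_subset Set.univ)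
  set T := (Set.toFinite r).toFinset
  rw [← (Set.toFinite r).coe_toFinset] at hr_span hr_indep
  let e : Basis {i // i ∈ T} ℝ W := Basis.mk hr_indep <| by
    rw [← hspan, ← Set.image_univ, Submodule.span_le, ← Set.image_eq_range]
    exact hr_span
  have hinj : Function.Injective (innerCoords W fun t : {i // i ∈ T} => b t) := by
    refine (injective_iff_map_eq_zero _).mpr fun x hx =>
      InnerProductSpace.ext_inner_right_basis e fun t => ?_
    simpa [e, P] using congrFun hx t
  have hdim : finrank ℝ W = finrank ℝ ({i // i ∈ T} → ℝ) := by
    rw [finrank_eq_card_basis e, finrank_fintype_fun_eq_card]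
  exact ⟨T, hinj, (LinearMap.injective_iff_surjective_of_finrank_eq_finrank hdim).mp hinj⟩

theorem injective_innerCoords_compl_of_surjective [Fintype ι] {b : Basis ι ℝ V}
    (hb : Orthonormal ℝ b) {W W' : Submodule ℝ V} (hWW' : W ⟂ W') {T : Finset ι}
    (hT : Function.Surjective (innerCoords W fun t : {i // i ∈ T} => b t)) :
    Function.Injective (innerCoords W' fun s : {i // i ∉ T} => b s) := by
  refine (injective_iff_map_eq_zero _).mpr fun x hx => ?_
  obtain ⟨w, hw⟩ := hT fun t => ⟪(x : V), b t⟫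
  have hx_off : ∀ i ∉ T, ⟪b i, (x : V)⟫ = 0 := fun i hi => by
    simpa [real_inner_comm] using congrFun hx ⟨i, hi⟩
  have hw_on : ∀ i ∈ T, ⟪(w : V), b i⟫ = ⟪(x : V), b i⟫ := fun i hi => by
    simpa using congrFun hw ⟨i, hi⟩
  let B := b.toOrthonormalBasis hb
  have hparseval : ⟪(x : V), x⟫ = ⟪(w : V), x⟫ := by
    rw [← B.sum_inner_mul_inner, ← B.sum_inner_mul_inner]
    refine Finset.sum_congr rfl fun i _ => ?_
    by_cases hi : i ∈ T
    · simp [B, hw_on i hi]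
    · simp [B, hx_off i hi]
  rw [hWW'.inner_eq w.2 x.2] at hparseval
  exact Subtype.ext (inner_self_eq_zero.mp hparseval)

end

/-- for a finite-dimensional real inner product space `V` with
orthonormal basis `S` (indexed by `ι`) and any subspace `U`, there is a
"spanning tree" `T ⊆ ι`: `U^⊥` has a basis `(x_t : t ∈ T)` with
`⟪x_t, t'⟫ = δ_{tt'}` and `U` has a basis `(x_s : s ∉ T)` with `⟪x_s, s'⟫ = δ_{ss'}`. -/
theorem stmt5 {V : Type*} [NormedAddCommGroup V] [InnerProductSpace ℝ V]
    [FiniteDimensional ℝ V] {ι : Type*} [Fintype ι] [DecidableEq ι]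
    (b : Module.Basis ι ℝ V) (hb : Orthonormal ℝ b) (U : Submodule ℝ V) :
    ∃ T : Finset ι,
      (∃ bCut : Module.Basis {i : ι // i ∈ T} ℝ ↥Uᗮ,
        ∀ t t' : {i : ι // i ∈ T},
          ⟪(bCut t : V), b t'.1⟫ = (if t = t' then 1 else 0)) ∧
      (∃ bCyc : Module.Basis {i : ι // i ∉ T} ℝ ↥U,
        ∀ s s' : {i : ι // i ∉ T},
          ⟪(bCyc s : V), b s'.1⟫ = (if s = s' then 1 else 0)) := by
  obtain ⟨T, hcut⟩ := exists_finset_bijective_innerCoords b Uᗮ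
  have hcyc_inj :=
    injective_innerCoords_compl_of_surjective hb U.isOrtho_orthogonal_right.symm hcut.2
  have hdim : finrank ℝ U = finrank ℝ ({i // i ∉ T} → ℝ) := by
    have hU := U.finrank_add_finrank_orthogonal
    have hUperp := (LinearEquiv.ofBijective _ hcut).finrank_eq
    rw [finrank_eq_card_basis b] at hU
    rw [finrank_fintype_fun_eq_card, Fintype.card_coe] at hUperp
    rw [finrank_fintype_fun_eq_card, Fintype.card_subtype_compl, Fintype.card_coe]
    omega
  have hcyc := (LinearMap.injective_iff_surjective_of_finrank_eq_finrank hdim).mp hcyc_inj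
  exact ⟨T, exists_basis_inner_eq_ite hcut, exists_basis_inner_eq_ite ⟨hcyc_inj, hcyc⟩⟩
end

section
/- For an oriented hypergraph over ℤ, the annihilator of Ker ∂_1 in C^1 equals Im δ^0 if and only if Im ∂_1 is a direct summand of C_0. -/
/-!
A functional vanishing on `Ker ∂₁` is the same thing as a functional on `Im ∂₁` pulled back
along `∂₁`, so `Ann (Ker ∂₁) = Im δ⁰` says exactly that every functional on `Im ∂₁` extends to
`C₀`. A complement of `Im ∂₁` gives such extensions through the projection. Conversely, `Im ∂₁`
is free of finite rank, being a subgroup of `ℤ^V`; extending its coordinate functionals `φᵢ` to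
`C₀` yields a retraction `x ↦ ∑ φᵢ(x) bᵢ` of `C₀` onto `Im ∂₁`, whose kernel is a complement.
-/

open Finset

/-- Incidence sign of vertex `v` in edge `e = (A e, B e)`. -/
def hsgn {V E : Type*} [DecidableEq V] (A B : E → Finset V) (e : E) (v : V) : ℤ :=
  (if v ∈ B e then 1 else 0) - (if v ∈ A e then 1 else 0)

/-- The boundary homomorphism `∂₁ : C₁ → C₀` of an oriented hypergraph over `ℤ`. -/
noncomputable def bdry {V E : Type*} [DecidableEq V] [Fintype E] (A B : E → Finset V) :
    (E → ℤ) →ₗ[ℤ] (V → ℤ) :=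
  LinearMap.pi fun v => ∑ e : E, hsgn A B e v • (LinearMap.proj e : (E → ℤ) →ₗ[ℤ] ℤ)

/-- The coboundary homomorphism `δ⁰ : C⁰ → C¹`, the dual of `∂₁`. -/
noncomputable def cobdry {V E : Type*} [DecidableEq V] [Fintype E] (A B : E → Finset V) :
    Module.Dual ℤ (V → ℤ) →ₗ[ℤ] Module.Dual ℤ (E → ℤ) :=
  (bdry A B).dualMap

/-- The canonical map `γ` from chains to cochains (dual-basis map). -/
noncomputable def gam (ι : Type*) [Fintype ι] [DecidableEq ι] :
    (ι → ℤ) →ₗ[ℤ] Module.Dual ℤ (ι → ℤ) :=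
  (Pi.basisFun ℤ ι).toDual

namespace LinearMap

variable {R M M' : Type*} [CommRing R] [AddCommGroup M] [Module R M] [AddCommGroup M']
  [Module R M']

theorem dualAnnihilator_ker_eq_range_dualMap_iff (f : M →ₗ[R] M') :
    (ker f).dualAnnihilator = range f.dualMap ↔
      Function.Surjective (range f).subtype.dualMap := by
  refine ⟨fun h φ => ?_, fun h =>
    (range_dualMap_eq_dualAnnihilator_ker_of_subtype_range_surjective f h).symm⟩
  have hφ : f.rangeRestrict.dualMap φ ∈ (ker f).dualAnnihilator := by
    rw [← ker_rangeRestrict f]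
    exact range_dualMap_le_dualAnnihilator_ker _ (mem_range_self _ φ)
  obtain ⟨ψ, hψ⟩ := h ▸ hφ
  refine ⟨ψ, dualMap_injective_of_surjective f.surjective_rangeRestrict ?_⟩
  rw [← hψ]
  rfl

end LinearMap

namespace Submodule

variable {R N : Type*} [CommRing R] [AddCommGroup N] [Module R N] {p : Submodule R N}

theorem dualMap_subtype_surjective_of_isCompl {q : Submodule R N} (h : IsCompl p q) :
    Function.Surjective p.subtype.dualMap := fun φ =>
  ⟨φ ∘ₗ p.projectionOnto q h, LinearMap.ext fun x => by
    simp [projectionOnto_apply_left]⟩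

theorem exists_isCompl_of_dualMap_subtype_surjective [Module.Free R p] [Module.Finite R p]
    (h : Function.Surjective p.subtype.dualMap) : ∃ q : Submodule R N, IsCompl p q := by
  let b := Module.Free.chooseBasis R p
  choose φ hφ using fun i => h (b.coord i)
  let r : N →ₗ[R] p := ∑ i, (φ i).smulRight (b i)
  refine ⟨LinearMap.ker r, LinearMap.isCompl_of_proj fun x => ?_⟩
  conv_rhs => rw [← b.sum_repr x]
  simp only [r, LinearMap.sum_apply, LinearMap.smulRight_apply]
  exact Finset.sum_congr rfl fun i _ => congrArg (· • b i) (LinearMap.congr_fun (hφ i) x)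

theorem exists_isCompl_iff_dualMap_subtype_surjective [Module.Free R p] [Module.Finite R p] :
    (∃ q : Submodule R N, IsCompl p q) ↔ Function.Surjective p.subtype.dualMap :=
  ⟨fun ⟨_, h⟩ => dualMap_subtype_surjective_of_isCompl h,
    exists_isCompl_of_dualMap_subtype_surjective⟩

end Submodule

theorem stmt11_general {V E : Type*} [Fintype V] [Fintype E] [DecidableEq V]
    (A B : E → Finset V) :
    (LinearMap.ker (bdry A B)).dualAnnihilator = LinearMap.range (cobdry A B) ↔
      ∃ W : Submodule ℤ (V → ℤ), IsCompl (LinearMap.range (bdry A B)) W :=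
  (bdry A B).dualAnnihilator_ker_eq_range_dualMap_iff.trans
    Submodule.exists_isCompl_iff_dualMap_subtype_surjective.symm

/-- the annihilator of `Ker ∂₁` in `C¹` equals `Im δ⁰` if and only if
`Im ∂₁` is a direct summand of `C₀`. -/
theorem stmt11 {V E : Type*} [Fintype V] [Fintype E] [DecidableEq V]
    (A B : E → Finset V) (hdisj : ∀ e, Disjoint (A e) (B e)) :
    (LinearMap.ker (bdry A B)).dualAnnihilator = LinearMap.range (cobdry A B) ↔
      ∃ W : Submodule ℤ (V → ℤ), IsCompl (LinearMap.range (bdry A B)) W :=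
  stmt11_general A B
end

section
/- Every oriented hypergraph over ℤ satisfies 𝒞 = ℬ^⊥: a 1-chain x lies in Ker ∂_1 if and only if ⟨x,b⟩ = 0 for all b ∈ γ^{-1}(Im δ^0), where ⟨·,·⟩ is the standard inner product on C_1 making E orthonormal. -/
open Finset

/-! `C₀` is free, so `∂₁ x = 0` iff every functional on `C₀` kills `∂₁ x`, i.e. iff
every element of `Im δ⁰` kills `x`. Since `γ` is an isomorphism turning evaluation into the
inner product `⟨·,·⟩`, this says exactly that `x` is orthogonal to `γ⁻¹(Im δ⁰)`. -/

theorem LinearMap.ker_eq_dualCoannihilator_range_dualMap {R M N : Type*} [CommSemiring R]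
    [AddCommMonoid M] [Module R M] [AddCommMonoid N] [Module R N] [Module.Projective R N]
    (f : M →ₗ[R] N) : LinearMap.ker f = (LinearMap.range f.dualMap).dualCoannihilator := by
  ext x
  simp only [LinearMap.mem_ker, Submodule.mem_dualCoannihilator, LinearMap.mem_range,
    forall_exists_index, forall_apply_eq_imp_iff, LinearMap.dualMap_apply]
  exact (Module.forall_dual_apply_eq_zero_iff R (f x)).symm

theorem Pi.basisFun_toDual_apply_s12 {R ι : Type*} [CommSemiring R] [Fintype ι] [DecidableEq ι]
    (v w : ι → R) : (Pi.basisFun R ι).toDual v w = v ⬝ᵥ w := by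
  conv_lhs => rw [← (Pi.basisFun R ι).sum_repr w]
  simp only [map_sum, map_smul, Module.Basis.toDual_apply_left, Pi.basisFun_repr, smul_eq_mul,
    dotProduct, mul_comm]

theorem stmt12_general {V E : Type*} [Fintype V] [Fintype E] [DecidableEq V] [DecidableEq E]
    (A B : E → Finset V) (x : E → ℤ) :
    x ∈ LinearMap.ker (bdry A B) ↔
      ∀ b ∈ Submodule.comap (gam E) (LinearMap.range (cobdry A B)),
        ∑ e : E, x e * b e = 0 := by
  rw [LinearMap.ker_eq_dualCoannihilator_range_dualMap, Submodule.mem_dualCoannihilator,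
    (Pi.basisFun ℤ E).toDualEquiv.surjective.forall]
  simp only [Module.Basis.toDualEquiv_apply, Pi.basisFun_toDual_apply_s12, dotProduct_comm]
  rfl

/-- every hypergraph over `ℤ` satisfies `𝒞 = ℬ^⊥`: a 1-chain lies in
`Ker ∂₁` iff it is orthogonal to every element of `ℬ = γ⁻¹(Im δ⁰)`. -/
theorem stmt12 {V E : Type*} [Fintype V] [Fintype E] [DecidableEq V] [DecidableEq E]
    (A B : E → Finset V) (hdisj : ∀ e, Disjoint (A e) (B e)) (x : E → ℤ) :
    x ∈ LinearMap.ker (bdry A B) ↔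
      ∀ b ∈ Submodule.comap (gam E) (LinearMap.range (cobdry A B)),
        ∑ e : E, x e * b e = 0 :=
  stmt12_general A B x
end

section
/- If an oriented hypergraph over ℤ has an algebraic spanning tree over the integers, then ℬ = 𝒞^⊥: every x ∈ C_1 with ⟨x,c⟩ = 0 for all c ∈ Ker∂_1 lies in γ^{-1}(Im δ^0). -/
open Finset

/-!
Given `u ⊥ 𝒞`, the element `y = ∑_{t ∈ T} u_t x_t` of `ℬ` agrees with `u` on `T`, so `z = u - y`
is orthogonal to `𝒞` (as `ℬ ⊥ 𝒞`) and vanishes on `T`. The element `w = ∑_{e ∉ T} z_e x_e` of `𝒞`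
agrees with `z` off `T`, hence `⟨z, z⟩ = ⟨z, w⟩ = 0`, which over `ℤ` forces `z = 0`.
-/

lemma sum_smul_apply_of_biorthogonal {ι E R : Type*} [Fintype ι] [DecidableEq ι] [CommRing R]
    (f : ι → E) (b : ι → E → R) (hb : ∀ i j, b i (f j) = if i = j then 1 else 0) (x : ι → R)
    (i : ι) : (∑ j, x j • b j) (f i) = x i := by
  simp [Finset.sum_apply, hb]

section Orthogonal

variable {E R : Type*} [Fintype E] [DecidableEq E]
  [CommRing R] [LinearOrder R] [IsStrictOrderedRing R]

theorem mem_of_forall_dotProduct_eq_zero (P Q : Submodule R (E → R))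
    (hPQ : ∀ p ∈ P, ∀ q ∈ Q, p ⬝ᵥ q = 0) (T : Finset E)
    (b : {t // t ∈ T} → P) (hb : ∀ i j, (b i : E → R) j.1 = if i = j then 1 else 0)
    (c : {e // e ∉ T} → Q) (hc : ∀ i j, (c i : E → R) j.1 = if i = j then 1 else 0)
    (x : E → R) (hx : ∀ q ∈ Q, x ⬝ᵥ q = 0) : x ∈ P := by
  set y : P := ∑ t : {t // t ∈ T}, x t • b t
  have hy : ∀ t ∈ T, (y : E → R) t = x t := fun t ht => by
    simpa [y] using sum_smul_apply_of_biorthogonal _ (fun i => (b i : E → R)) hb (x ∘ (↑)) ⟨t, ht⟩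
  set z := x - y
  have hz_orth : ∀ q ∈ Q, z ⬝ᵥ q = 0 := fun q hq => by
    rw [sub_dotProduct, hx q hq, hPQ y y.2 q hq, sub_zero]
  set w : Q := ∑ e : {e // e ∉ T}, z e • c e
  have hw : ∀ e ∉ T, (w : E → R) e = z e := fun e he => by
    simpa [w] using sum_smul_apply_of_biorthogonal _ (fun i => (c i : E → R)) hc (z ∘ (↑)) ⟨e, he⟩
  have hzz : z ⬝ᵥ z = 0 := by
    rw [← hz_orth w w.2]
    refine Finset.sum_congr rfl fun e _ => ?_
    by_cases he : e ∈ T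
    · simp [z, hy e he]
    · rw [hw e he]
  have hxy : x = y := sub_eq_zero.mp (dotProduct_self_eq_zero.mp hzz)
  exact hxy ▸ y.2

end Orthogonal

lemma gam_apply {ι : Type*} [Fintype ι] [DecidableEq ι] (x y : ι → ℤ) :
    gam ι x y = x ⬝ᵥ y := by
  conv_lhs => rw [← (Pi.basisFun ℤ ι).sum_repr y]
  simp only [gam, map_sum, map_smul, Module.Basis.toDual_eq_repr, Pi.basisFun_repr, smul_eq_mul,
    dotProduct, mul_comm]

lemma dotProduct_eq_zero_of_mem_comap_gam_of_mem_ker {V E : Type*} [Fintype E] [DecidableEq V]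
    [DecidableEq E] (A B : E → Finset V) {b c : E → ℤ}
    (hb : b ∈ Submodule.comap (gam E) (LinearMap.range (cobdry A B)))
    (hc : c ∈ LinearMap.ker (bdry A B)) : b ⬝ᵥ c = 0 := by
  obtain ⟨f, hf⟩ := hb
  rw [← gam_apply, ← hf]
  exact (congrArg f (LinearMap.mem_ker.mp hc)).trans (map_zero f)

theorem stmt13_general {V E : Type*} [Fintype E] [DecidableEq V] [DecidableEq E]
    (A B : E → Finset V)
    (T : Finset E)
    (bB : Module.Basis {t : E // t ∈ T} ℤ
      ↥(Submodule.comap (gam E) (LinearMap.range (cobdry A B))))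
    (hbB : ∀ t t' : {t : E // t ∈ T},
      (bB t : E → ℤ) t'.1 = (if t = t' then 1 else 0))
    (bC : Module.Basis {e : E // e ∉ T} ℤ ↥(LinearMap.ker (bdry A B)))
    (hbC : ∀ e e' : {e : E // e ∉ T},
      (bC e : E → ℤ) e'.1 = (if e = e' then 1 else 0))
    (x : E → ℤ) (hx : ∀ c ∈ LinearMap.ker (bdry A B), ∑ e : E, x e * c e = 0) :
    x ∈ Submodule.comap (gam E) (LinearMap.range (cobdry A B)) :=
  mem_of_forall_dotProduct_eq_zero _ _
    (fun _ hb _ hc => dotProduct_eq_zero_of_mem_comap_gam_of_mem_ker A B hb hc)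
    T bB hbB bC hbC x hx

/-- a hypergraph with an algebraic spanning tree over the integers
satisfies `ℬ = 𝒞^⊥`: every `x ∈ C₁` orthogonal to all of `Ker ∂₁` lies in
`γ⁻¹(Im δ⁰)`. -/
theorem stmt13 {V E : Type*} [Fintype V] [Fintype E] [DecidableEq V] [DecidableEq E]
    (A B : E → Finset V) (hdisj : ∀ e, Disjoint (A e) (B e))
    (T : Finset E)
    (bB : Module.Basis {t : E // t ∈ T} ℤ
      ↥(Submodule.comap (gam E) (LinearMap.range (cobdry A B))))
    (hbB : ∀ t t' : {t : E // t ∈ T},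
      (bB t : E → ℤ) t'.1 = (if t = t' then 1 else 0))
    (bC : Module.Basis {e : E // e ∉ T} ℤ ↥(LinearMap.ker (bdry A B)))
    (hbC : ∀ e e' : {e : E // e ∉ T},
      (bC e : E → ℤ) e'.1 = (if e = e' then 1 else 0))
    (x : E → ℤ) (hx : ∀ c ∈ LinearMap.ker (bdry A B), ∑ e : E, x e * c e = 0) :
    x ∈ Submodule.comap (gam E) (LinearMap.range (cobdry A B)) :=
  stmt13_general A B T bB hbB bC hbC x hx
end

section
/- Consider the hypergraph with V = {v_1,v_2,v_3}, E = {e_1,e_2,e_3}, where e_i = ({v_j,v_k},{v_i}) for {i,j,k} = {1,2,3}; over ℤ, the boundary ∂_1 is injective but its image is not a direct summand of C_0; consequently the annihilator of Ker∂_1 in C^1 contains Im δ^0 properly, and H_1 = 0 while H^1 = C^1/Im δ^0 ≠ 0, so H_1 ≇ H^1. -/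
open Finset

/-!
The boundary `∂₁` is the endomorphism of `ℤ³` with matrix `1` on the diagonal and `-1` off it,
of determinant `-4`. As `-4 ≠ 0`, `∂₁` is injective, so `H₁ = 0`. As `-4` is not a unit, neither
is `det δ⁰ = det ∂₁`; a surjective endomorphism of a finitely generated module over a commutative
ring is bijective, so `δ⁰` is not surjective and `H¹ ≠ 0`. The image of `∂₁` is not a direct
summand since `2 e₁ = ∂₁ (0, -1, -1)` while `e₁ ∉ Im ∂₁`, whereas a direct summand `p` of `M`
contains `x` as soon as it contains `c • x` for a non-zero-divisor `c` on `M`.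
-/

theorem Submodule.mem_of_smul_mem_of_isCompl {R M : Type*} [Ring R] [AddCommGroup M]
    [Module R M] {p q : Submodule R M} (hpq : IsCompl p q) {c : R} (hc : IsSMulRegular M c) {x : M}
    (hcx : c • x ∈ p) : x ∈ p := by
  obtain ⟨y, hy, z, hz, rfl⟩ :=
    Submodule.mem_sup.1 (hpq.sup_eq_top ▸ Submodule.mem_top : x ∈ p ⊔ q)
  have hcz : c • z ∈ p ⊓ q :=
    ⟨by simpa [smul_add] using p.sub_mem hcx (p.smul_mem c hy), q.smul_mem c hz⟩
  rw [hpq.inf_eq_bot, Submodule.mem_bot, ← smul_zero c] at hcz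
  simpa [hc hcz] using hy

theorem LinearMap.range_dualMap_ne_top_of_not_isUnit_det {R M : Type*} [CommRing R]
    [AddCommGroup M] [Module R M] [Module.Free R M] [Module.Finite R M] {f : M →ₗ[R] M}
    (hf : ¬ IsUnit (LinearMap.det f)) : LinearMap.range f.dualMap ≠ ⊤ := by
  intro htop
  have hbij := OrzechProperty.bijective_of_surjective_endomorphism f.dualMap
    (LinearMap.range_eq_top.1 htop)
  rw [← LinearMap.det_dualMap] at hf
  exact hf ((LinearMap.isUnit_iff_isUnit_det _).1 ((Module.End.isUnit_iff _).2 hbij))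

theorem toMatrix'_bdry {V E : Type*} [DecidableEq V] [Fintype E] [DecidableEq E]
    (A B : E → Finset V) :
    LinearMap.toMatrix' (bdry A B) = Matrix.of fun v e => hsgn A B e v := by
  ext v e
  simp [LinearMap.toMatrix'_apply, bdry, Pi.single_apply]

abbrev tail3 : Fin 3 → Finset (Fin 3) := fun i => {i}ᶜ
abbrev head3 : Fin 3 → Finset (Fin 3) := fun i => {i}

theorem toMatrix'_bdry_tail3_head3 :
    LinearMap.toMatrix' (bdry tail3 head3) = !![1, -1, -1; -1, 1, -1; -1, -1, 1] := by
  rw [toMatrix'_bdry]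
  ext v e
  fin_cases v <;> fin_cases e <;> rfl

theorem det_bdry_tail3_head3 : LinearMap.det (bdry tail3 head3) = -4 := by
  rw [← LinearMap.det_toMatrix', toMatrix'_bdry_tail3_head3, Matrix.det_fin_three]
  rfl

theorem bdry_tail3_head3_apply (x : Fin 3 → ℤ) :
    bdry tail3 head3 x = ![x 0 - x 1 - x 2, -x 0 + x 1 - x 2, -x 0 - x 1 + x 2] := by
  rw [← Matrix.toLin'_toMatrix' (bdry tail3 head3), toMatrix'_bdry_tail3_head3]
  ext i
  fin_cases i <;> simp [Matrix.mulVec, dotProduct, Fin.sum_univ_three] <;> ring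

theorem ker_bdry_tail3_head3 : LinearMap.ker (bdry tail3 head3) = ⊥ := by
  by_contra h
  have := LinearMap.det_eq_zero_iff_ker_ne_bot.2 h
  rw [det_bdry_tail3_head3] at this
  norm_num at this

theorem single_zero_notMem_range_bdry_tail3_head3 :
    Pi.single 0 1 ∉ LinearMap.range (bdry tail3 head3) := by
  rintro ⟨x, hx⟩
  rw [bdry_tail3_head3_apply] at hx
  have h0 := congrFun hx 0
  have h1 := congrFun hx 1
  simp only [Fin.isValue, Matrix.cons_val_zero, Matrix.cons_val_one, Pi.single_eq_same,
    ne_eq, one_ne_zero, not_false_eq_true, Pi.single_eq_of_ne] at h0 h1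
  omega

theorem two_smul_single_zero_mem_range_bdry_tail3_head3 :
    (2 : ℤ) • Pi.single 0 1 ∈ LinearMap.range (bdry tail3 head3) := by
  refine ⟨![0, -1, -1], ?_⟩
  rw [bdry_tail3_head3_apply]
  ext i
  fin_cases i <;> simp

/-- the hypergraph on `V = {v₁,v₂,v₃}`, `E = {e₁,e₂,e₃}` with
`eᵢ = ({vⱼ,vₖ},{vᵢ})` has injective `∂₁` whose image is not a direct summand of
`C₀`; the annihilator of `Ker ∂₁` contains `Im δ⁰` properly; `H₁ = 0` while
`H¹ ≠ 0`, so `H₁ ≇ H¹`. -/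
theorem stmt16 :
    let A : Fin 3 → Finset (Fin 3) := fun i => ({i} : Finset (Fin 3))ᶜ
    let B : Fin 3 → Finset (Fin 3) := fun i => {i}
    Function.Injective (bdry A B) ∧
    (¬ ∃ W : Submodule ℤ (Fin 3 → ℤ), IsCompl (LinearMap.range (bdry A B)) W) ∧
    LinearMap.range (cobdry A B) < (LinearMap.ker (bdry A B)).dualAnnihilator ∧
    LinearMap.ker (bdry A B) = ⊥ ∧
    Nontrivial (Module.Dual ℤ (Fin 3 → ℤ) ⧸ LinearMap.range (cobdry A B)) ∧
    IsEmpty (↥(LinearMap.ker (bdry A B)) ≃ₗ[ℤ]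
      (Module.Dual ℤ (Fin 3 → ℤ) ⧸ LinearMap.range (cobdry A B))) := by
  intro A B
  rw [show A = tail3 from rfl, show B = head3 from rfl]
  have hcobdry : LinearMap.range (cobdry tail3 head3) ≠ ⊤ :=
    LinearMap.range_dualMap_ne_top_of_not_isUnit_det (by rw [det_bdry_tail3_head3]; decide)
  have hH1 := Submodule.Quotient.nontrivial_iff.2 hcobdry
  refine ⟨LinearMap.ker_eq_bot.1 ker_bdry_tail3_head3, ?_, ?_, ker_bdry_tail3_head3, hH1, ?_⟩
  · rintro ⟨W, hW⟩
    exact single_zero_notMem_range_bdry_tail3_head3 <| Submodule.mem_of_smul_mem_of_isCompl hW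
      (IsRegular.of_ne_zero two_ne_zero).isSMulRegular
      two_smul_single_zero_mem_range_bdry_tail3_head3
  · rw [ker_bdry_tail3_head3, Submodule.dualAnnihilator_bot]
    exact lt_top_iff_ne_top.2 hcobdry
  · exact ⟨fun e => Submodule.nontrivial_iff_ne_bot.1 e.toEquiv.nontrivial ker_bdry_tail3_head3⟩
end

section
/- The hypergraph with V = {v_1,v_2,v_3}, E = {e_1,e_2,e_3}, e_i = ({v_j,v_k},{v_i}) for {i,j,k}={1,2,3}, has no algebraic spanning tree over the integers: there is no T ⊆ E admitting bases of ℬ = γ^{-1}(Im δ^0) and 𝒞 = Ker∂_1 satisfying the spanning tree axioms over ℤ. -/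
open Finset

/-! Write `s = ∑ₑ xₑ`. In this hypergraph `(∂₁ x)ᵥ = 2 xᵥ - s`. Summing over the three
vertices gives `-s`, so `∂₁` is injective, `𝒞 = 0`, and a spanning tree must have `T = E`. But then
the basis of `ℬ` would contain the indicator of `e₁`, whereas `(δ⁰ f)(eⱼ) = 2 f(vⱼ) - f(v₁ + v₂ + v₃)`
shows that all coordinates of an element of `Im δ⁰` have the same parity. -/

lemma gam_apply_single {ι : Type*} [Fintype ι] [DecidableEq ι] (x : ι → ℤ) (j : ι) :
    gam ι x (Pi.single j 1) = x j := by
  rw [← Pi.basisFun_apply, gam, Module.Basis.toDual_apply_left, Pi.basisFun_repr]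

lemma bdry_apply {V E : Type*} [DecidableEq V] [Fintype E] (A B : E → Finset V)
    (x : E → ℤ) (v : V) : bdry A B x v = ∑ e, hsgn A B e v * x e := by
  simp [bdry]

section InStar

variable {V : Type*} [Fintype V] [DecidableEq V]

/-- The edge `eᵢ = (V ∖ {vᵢ}, {vᵢ})` has tail `complTail i` and head `singletonHead i`. -/
abbrev complTail (i : V) : Finset V := {i}ᶜ

abbrev singletonHead (i : V) : Finset V := {i}

lemma hsgn_complTail_singletonHead (e v : V) :
    hsgn complTail singletonHead e v = if v = e then 1 else -1 := by
  by_cases h : v = e <;> simp [hsgn, h]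

lemma bdry_complTail_singletonHead_apply (x : V → ℤ) (v : V) :
    bdry complTail singletonHead x v = 2 * x v - ∑ e, x e := by
  have hterm : ∀ e, (if v = e then 1 else -1) * x e = 2 * (if v = e then x e else 0) - x e := by
    intro e
    split_ifs <;> ring
  simp only [bdry_apply, hsgn_complTail_singletonHead, hterm, Finset.sum_sub_distrib,
    ← Finset.mul_sum, Finset.sum_ite_eq, Finset.mem_univ, if_true]

lemma ker_bdry_complTail_singletonHead (hV : Fintype.card V ≠ 2) :
    LinearMap.ker (bdry (complTail (V := V)) singletonHead) = ⊥ := by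
  refine (LinearMap.ker_eq_bot').2 fun x hx => ?_
  have hv : ∀ v, 2 * x v = ∑ e, x e := fun v => by
    simpa [bdry_complTail_singletonHead_apply, sub_eq_zero] using congrFun hx v
  have hsum : ∑ e, x e = 0 := by
    have h := Finset.sum_congr rfl fun v (_ : v ∈ Finset.univ) => hv v
    rw [← Finset.mul_sum, Finset.sum_const, Finset.card_univ, nsmul_eq_mul] at h
    have : (2 : ℤ) - Fintype.card V ≠ 0 := by omega
    exact (mul_eq_zero.1 (by linear_combination h)).resolve_left this
  funext v
  simpa [hsum] using hv v

lemma bdry_complTail_singletonHead_single (j : V) :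
    bdry complTail singletonHead (Pi.single j 1) = 2 • Pi.single j 1 - fun _ => 1 := by
  funext v
  simp [bdry_complTail_singletonHead_apply]

lemma two_dvd_sub_of_gam_mem_range_cobdry (x : V → ℤ)
    (hx : gam V x ∈ LinearMap.range (cobdry complTail singletonHead)) (j k : V) :
    2 ∣ x j - x k := by
  obtain ⟨f, hf⟩ := hx
  have hcoord : ∀ i, x i = 2 * f (Pi.single i 1) - f fun _ => 1 := fun i => by
    rw [← gam_apply_single x i, ← hf, cobdry, LinearMap.dualMap_apply,
      bdry_complTail_singletonHead_single, map_sub, map_nsmul, two_nsmul, two_mul]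
  exact ⟨f (Pi.single j 1) - f (Pi.single k 1), by rw [hcoord, hcoord]; ring⟩

end InStar

/-- the hypergraph on `V = {v₁,v₂,v₃}`, `E = {e₁,e₂,e₃}` with
`eᵢ = ({vⱼ,vₖ},{vᵢ})` has no algebraic spanning tree over the integers. -/
theorem stmt17 :
    let A : Fin 3 → Finset (Fin 3) := fun i => ({i} : Finset (Fin 3))ᶜ
    let B : Fin 3 → Finset (Fin 3) := fun i => {i}
    ¬ ∃ (T : Finset (Fin 3))
        (bB : Module.Basis {t : Fin 3 // t ∈ T} ℤ
          ↥(Submodule.comap (gam (Fin 3)) (LinearMap.range (cobdry A B))))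
        (bC : Module.Basis {e : Fin 3 // e ∉ T} ℤ ↥(LinearMap.ker (bdry A B))),
      (∀ t t' : {t : Fin 3 // t ∈ T},
        (bB t : Fin 3 → ℤ) t'.1 = (if t = t' then 1 else 0)) ∧
      (∀ e e' : {e : Fin 3 // e ∉ T},
        (bC e : Fin 3 → ℤ) e'.1 = (if e = e' then 1 else 0)) := by
  intro A B
  rintro ⟨T, bB, bC, hbB, -⟩
  have hker : LinearMap.ker (bdry A B) = ⊥ := ker_bdry_complTail_singletonHead (by decide)
  have hT : ∀ e, e ∈ T := fun e => by
    by_contra he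
    exact bC.ne_zero ⟨e, he⟩ (Subtype.ext ((Submodule.mem_bot ℤ).1 (hker ▸ (bC ⟨e, he⟩).2)))
  have hparity := two_dvd_sub_of_gam_mem_range_cobdry _ (bB ⟨0, hT 0⟩).2 0 1
  have h00 := hbB ⟨0, hT 0⟩ ⟨0, hT 0⟩
  have h01 := hbB ⟨0, hT 0⟩ ⟨1, hT 1⟩
  simp only [Subtype.mk.injEq, if_true, Fin.zero_eq_one_iff] at h00 h01
  rw [h00, h01] at hparity
  norm_num at hparity
end
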